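/- Let the edges of K_n carry i.i.d. good weights and let W_n be the maximum total weight over all paths from vertex 1 to vertex 2. Then P(W_n > n Λ*⁻¹(log n)) → 0 as n → ∞. -/

import Mathlib

open MeasureTheory ProbabilityTheory Real Filter

noncomputable section

-- Log-moment generating function `Λ`, valued in `EReal` (`⊤` when the exponential
-- moment is infinite).
open Classical in
def lmgf {Ω : Type*} [MeasurableSpace Ω] (μ : Measure Ω) (X : Ω → ℝ) (s : ℝ) : EReal :=
  if Integrable (fun ω => Real.exp (s * X ω)) μ
  then ((Real.log (∫ ω, Real.exp (s * X ω) ∂μ) : ℝ) : EReal)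
  else ⊤

/-- The Legendre transform `Λ*` of the log-moment generating function (rate function). -/
def rateFn {Ω : Type*} [MeasurableSpace Ω] (μ : Measure Ω) (X : Ω → ℝ) (t : ℝ) : EReal :=
  ⨆ s : ℝ, ((s * t : ℝ) : EReal) - lmgf μ X s

/-- The generalised inverse `Λ*⁻¹(t) = inf {s ≥ 0 : Λ*(s) ≥ t}`. -/
def rateFnInv {Ω : Type*} [MeasurableSpace Ω] (μ : Measure Ω) (X : Ω → ℝ) (t : ℝ) : ℝ :=
  sInf {s : ℝ | 0 ≤ s ∧ (t : EReal) ≤ rateFn μ X s}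

/-- `X` is symmetric: `-X` has the same distribution as `X`. -/
def SymmetricRV {Ω : Type*} [MeasurableSpace Ω] (μ : Measure Ω) (X : Ω → ℝ) : Prop :=
  Measure.map X μ = Measure.map (fun ω => -X ω) μ

/-- `Λ` is finite in a neighbourhood of `0`. -/
def FiniteLmgfNearZero {Ω : Type*} [MeasurableSpace Ω] (μ : Measure Ω) (X : Ω → ℝ) : Prop :=
  ∃ δ > (0:ℝ), ∀ s : ℝ, |s| < δ → lmgf μ X s ≠ ⊤

/-- `X` has regular upper tails: `P(X > t) = exp(-(1+o(1)) Λ*(t))` as `t → ∞`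
(vacuous at points where `Λ*(t) = ∞`). -/
def RegularUpperTails {Ω : Type*} [MeasurableSpace Ω] (μ : Measure Ω) (X : Ω → ℝ) : Prop :=
  ∀ ε > (0:ℝ), ∀ᶠ t in atTop, ∀ r : ℝ, rateFn μ X t = (r : EReal) →
    Real.exp (-(1+ε)*r) ≤ (μ {ω | t < X ω}).toReal ∧
    (μ {ω | t < X ω}).toReal ≤ Real.exp (-(1-ε)*r)

/-- A good random variable: symmetric, `Λ` finite near `0`, regular upper tails. -/
def Good {Ω : Type*} [MeasurableSpace Ω] (μ : Measure Ω) (X : Ω → ℝ) : Prop :=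
  SymmetricRV μ X ∧ FiniteLmgfNearZero μ X ∧ RegularUpperTails μ X

/-- The non-diagonal elements of `Sym2 (Fin n)`: the edges of the complete graph `K_n`. -/
abbrev EdgeT (n : ℕ) := {e : Sym2 (Fin n) // ¬ e.IsDiag}


/-- Total weight of a subgraph `G'` of `K_n` with edge weights `x`. -/
def graphWeight {n : ℕ} (x : EdgeT n → ℝ) (G' : SimpleGraph (Fin n)) : ℝ :=
  ∑ e : EdgeT n, Set.indicator {e' : EdgeT n | (e' : Sym2 (Fin n)) ∈ G'.edgeSet} x e

/-- Total weight of the edges of a walk `p` with edge weights `x`. -/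
def walkWeight {n : ℕ} (x : EdgeT n → ℝ) {u v : Fin n}
    (p : (⊤ : SimpleGraph (Fin n)).Walk u v) : ℝ :=
  ∑ e : EdgeT n, Set.indicator {e' : EdgeT n | (e' : Sym2 (Fin n)) ∈ p.edges} x e

end


/-!
For a fixed path with `ℓ ≤ N` edges, Chernoff's bound gives
`P(weight ≥ N u) ≤ exp(-s N u + ℓ Λ(s)) ≤ exp(-N (s u - Λ(s)))`, where `Λ ≥ 0` because the weights
are symmetric. Choosing `s` nearly optimal for `Λ*(u) ≥ log N` makes this at most
`exp(-N log N + 1)`, and a union bound over the at most `N ^ (N - 1)` paths gives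
`P(W ≥ N u) ≤ e / N`. The regular upper tails make `{u ≥ 0 | Λ*(u) ≥ log N}` nonempty, so `u` can
decrease to `Λ*⁻¹(log N)`, and continuity from below gives `P(W > N Λ*⁻¹(log N)) ≤ e / N`.
-/

section RateFunction

variable {Ω : Type*} [MeasurableSpace Ω] {μ : Measure Ω} {ξ : Ω → ℝ}

lemma lmgf_eq_cgf {s : ℝ} (h : Integrable (fun ω => exp (s * ξ ω)) μ) :
    lmgf μ ξ s = (cgf ξ μ s : EReal) := by
  rw [lmgf, if_pos h]
  rfl

lemma integrable_exp_mul_of_lmgf_ne_top {s : ℝ} (h : lmgf μ ξ s ≠ ⊤) :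
    Integrable (fun ω => exp (s * ξ ω)) μ := by
  by_contra hint
  exact h (if_neg hint)

lemma SymmetricRV.one_le_mgf [IsProbabilityMeasure μ] (hsym : SymmetricRV μ ξ)
    (hξ : Measurable ξ) {s : ℝ} (h : Integrable (fun ω => exp (s * ξ ω)) μ) :
    1 ≤ mgf ξ μ s := by
  have hid : IdentDistrib ξ (-ξ) μ μ := ⟨hξ.aemeasurable, hξ.neg.aemeasurable, hsym⟩
  have hflip : mgf ξ μ (-s) = mgf ξ μ s := by
    rw [← mgf_neg, ← mgf_congr_identDistrib hid]
  have h' : Integrable (fun ω => exp (-s * ξ ω)) μ := by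
    have := ((hid.comp (measurable_const_mul s).exp).integrable_iff).mp h
    simpa [Function.comp_def] using this
  -- `e^x + e^{-x} ≥ 2` pointwise, and by symmetry both halves have the same integral
  have htwo : 2 ≤ mgf ξ μ s + mgf ξ μ (-s) := by
    rw [mgf, mgf, ← integral_add h h']
    calc (2 : ℝ) = ∫ _, (2 : ℝ) ∂μ := by simp
      _ ≤ _ := integral_mono (integrable_const 2) (h.add h') fun ω => by
        have := Real.one_le_cosh (s * ξ ω)
        rw [Real.cosh_eq] at this
        simp only [Pi.add_apply, neg_mul]
        linarith
  linarith

lemma SymmetricRV.cgf_nonneg [IsProbabilityMeasure μ] (hsym : SymmetricRV μ ξ)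
    (hξ : Measurable ξ) (s : ℝ) : 0 ≤ cgf ξ μ s := by
  by_cases h : Integrable (fun ω => exp (s * ξ ω)) μ
  · exact log_nonneg (hsym.one_le_mgf hξ h)
  · rw [cgf_undef h]

lemma rateFn_nonneg [IsProbabilityMeasure μ] (t : ℝ) : 0 ≤ rateFn μ ξ t := by
  refine le_iSup_of_le 0 ?_
  rw [lmgf_eq_cgf (by simp), cgf_zero]
  simp

lemma exists_lt_mul_sub_cgf_of_lt_rateFn [IsProbabilityMeasure μ] (hsym : SymmetricRV μ ξ)
    (hξ : Measurable ξ) {u c : ℝ} (hu : 0 ≤ u) (hc : (c : EReal) < rateFn μ ξ u) :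
    ∃ s, 0 ≤ s ∧ Integrable (fun ω => exp (s * ξ ω)) μ ∧ c < s * u - cgf ξ μ s := by
  obtain ⟨s, hs⟩ := lt_iSup_iff.mp hc
  have hfin : lmgf μ ξ s ≠ ⊤ := by
    rintro htop
    simp [htop] at hs
  have hint := integrable_exp_mul_of_lmgf_ne_top hfin
  rw [lmgf_eq_cgf hint, ← EReal.coe_sub, EReal.coe_lt_coe_iff] at hs
  rcases le_or_gt 0 s with hs0 | hs0
  · exact ⟨s, hs0, hint, hs⟩
  -- a negative `s` only gives `c < 0`, which `s = 0` already witnesses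
  · refine ⟨0, le_rfl, by simp, ?_⟩
    have := hsym.cgf_nonneg hξ s
    rw [cgf_zero]
    nlinarith

lemma tendsto_measure_lt_atTop [IsFiniteMeasure μ] (hξ : Measurable ξ) :
    Tendsto (fun a : ℝ => μ {ω | a < ξ ω}) atTop (nhds 0) := by
  have hempty : (⋂ a : ℝ, {ω | a < ξ ω}) = ∅ := by
    ext ω
    simpa using ⟨ξ ω, le_rfl⟩
  have := tendsto_measure_iInter_atTop (μ := μ) (s := fun a : ℝ => {ω | a < ξ ω})
    (fun a => (measurableSet_lt measurable_const hξ).nullMeasurableSet)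
    (fun a b hab ω (hω : b < ξ ω) => lt_of_le_of_lt hab hω) ⟨0, measure_ne_top _ _⟩
  rwa [hempty, measure_empty] at this

lemma RegularUpperTails.exists_le_rateFn [IsProbabilityMeasure μ] (hreg : RegularUpperTails μ ξ)
    (hξ : Measurable ξ) (c : ℝ) : ∃ a, 0 ≤ a ∧ (c : EReal) ≤ rateFn μ ξ a := by
  have hsmall : ∀ᶠ a in atTop, μ.real {ω | a < ξ ω} < exp (-(1 + 1) * c) :=
    ((ENNReal.tendsto_toReal ENNReal.zero_ne_top).comp (tendsto_measure_lt_atTop hξ)).eventually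
      (gt_mem_nhds (exp_pos _))
  obtain ⟨a, ha, hsmall, hlarge⟩ :=
    (eventually_ge_atTop 0 |>.and <| hsmall.and (hreg 1 one_pos)).exists
  refine ⟨a, ha, not_lt.mp fun hlt => ?_⟩
  -- otherwise `Λ*(a)` is a real `r < c`, and the regular tail gives `P(ξ > a) ≥ e^{-2r} > e^{-2c}`
  obtain ⟨r, hr⟩ : ∃ r : ℝ, rateFn μ ξ a = r :=
    ⟨_, (EReal.coe_toReal hlt.ne_top (EReal.bot_lt_zero.trans_le (rateFn_nonneg a)).ne').symm⟩
  rw [hr, EReal.coe_lt_coe_iff] at hlt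
  have := (hlarge r hr).1
  have : exp (-(1 + 1) * c) < exp (-(1 + 1) * r) := exp_lt_exp.mpr (by linarith)
  simp only [measureReal_def] at hsmall
  linarith

lemma exists_le_rateFn_lt_rateFnInv_add {c δ : ℝ} (hc : ∃ a, 0 ≤ a ∧ (c : EReal) ≤ rateFn μ ξ a)
    (hδ : 0 < δ) : ∃ u, 0 ≤ u ∧ (c : EReal) ≤ rateFn μ ξ u ∧ u < rateFnInv μ ξ c + δ := by
  obtain ⟨u, ⟨hu, huc⟩, hlt⟩ := Real.lt_sInf_add_pos hc hδ
  exact ⟨u, hu, huc, hlt⟩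

end RateFunction

section Chernoff

variable {ι Ω Ω₀ : Type*} [MeasurableSpace Ω] [MeasurableSpace Ω₀] {μ : Measure Ω}
  {μ₀ : Measure Ω₀} [IsProbabilityMeasure μ₀] {ξ : Ω₀ → ℝ} {X : ι → Ω → ℝ}

lemma measure_sum_ge_le_exp_of_lt_rateFn (hmeas : ∀ i, Measurable (X i)) (hind : iIndepFun X μ)
    (hid : ∀ i, IdentDistrib (X i) ξ μ μ₀) (hsym : SymmetricRV μ₀ ξ) (hξ : Measurable ξ)
    {F : Finset ι} {m : ℕ} (hF : F.card ≤ m) {u c : ℝ} (hu : 0 ≤ u)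
    (hc : (c : EReal) < rateFn μ₀ ξ u) :
    μ {ω | m * u ≤ ∑ i ∈ F, X i ω} ≤ ENNReal.ofReal (exp (-(m * c))) := by
  have := hind.isProbabilityMeasure
  obtain ⟨s, hs, hint, hsc⟩ := exists_lt_mul_sub_cgf_of_lt_rateFn hsym hξ hu hc
  have hint_i : ∀ i, Integrable (fun ω => exp (s * X i ω)) μ := fun i =>
    ((hid i).comp (measurable_const_mul s).exp).integrable_iff.mpr hint
  have hcgf_i : ∀ i, cgf (X i) μ s = cgf ξ μ₀ s := fun i => by
    rw [cgf, cgf, mgf_congr_identDistrib (hid i)]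
  have hchernoff := measure_ge_le_exp_cgf (X := ∑ i ∈ F, X i) (m * u) hs
    (hind.integrable_exp_mul_sum hmeas fun i _ => hint_i i)
  rw [hind.cgf_sum hmeas fun i _ => hint_i i, Finset.sum_congr rfl fun i _ => hcgf_i i,
    Finset.sum_const, nsmul_eq_mul] at hchernoff
  -- `Λ ≥ 0` lets us replace the number of summands by `m`
  have hexp : -s * (m * u) + F.card * cgf ξ μ₀ s ≤ -(m * c) := by
    have hcard : (F.card : ℝ) ≤ m := by exact_mod_cast hF
    have := hsym.cgf_nonneg hξ s
    nlinarith [mul_le_mul_of_nonneg_right hcard this, hsc.le, (Nat.cast_nonneg m : (0 : ℝ) ≤ m)]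
  simp only [Finset.sum_apply] at hchernoff
  rw [← ofReal_measureReal (measure_ne_top _ _)]
  exact ENNReal.ofReal_le_ofReal (hchernoff.trans (exp_le_exp.mpr hexp))

end Chernoff

lemma SimpleGraph.card_path_le {V : Type*} [Fintype V] [DecidableEq V] (G : SimpleGraph V)
    [DecidableRel G.Adj] (u v : V) :
    Fintype.card (G.Path u v) ≤ Fintype.card V ^ (Fintype.card V - 1) := by
  -- a path has fewer than `|V|` edges, so it is determined by its vertices at times `1, …, |V| - 1`
  have hinj : Function.Injective fun (p : G.Path u v) (i : Fin (Fintype.card V - 1)) =>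
      p.1.getVert (i + 1) := by
    intro p q hpq
    refine Subtype.ext <| Walk.ext_getVert fun k => ?_
    rcases k with _ | k
    · simp
    by_cases hk : k < Fintype.card V - 1
    · exact congrFun hpq ⟨k, hk⟩
    · have hp := p.2.length_lt
      have hq := q.2.length_lt
      rw [Walk.getVert_of_length_le _ (by omega), Walk.getVert_of_length_le _ (by omega)]
  simpa using Fintype.card_le_of_injective _ hinj

section Walks

variable {n : ℕ} {u v : Fin n}

lemma walkWeight_eq_sum (x : EdgeT n → ℝ) (p : (⊤ : SimpleGraph (Fin n)).Walk u v) :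
    walkWeight x p = ∑ e ∈ Finset.univ.filter (fun e : EdgeT n => e.1 ∈ p.edges), x e := by
  rw [walkWeight, Finset.sum_filter]
  exact Finset.sum_congr rfl fun e _ => by simp [Set.indicator_apply]

lemma card_filter_mem_edges_le (p : (⊤ : SimpleGraph (Fin n)).Walk u v) :
    (Finset.univ.filter fun e : EdgeT n => e.1 ∈ p.edges).card ≤ p.length := by
  calc _ ≤ p.edges.toFinset.card :=
        Finset.card_le_card_of_injOn Subtype.val (fun e he => by simpa using he)
          Subtype.val_injective.injOn
    _ ≤ p.length := p.length_edges ▸ p.edges.toFinset_card_le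

end Walks

lemma measure_lt_le_of_forall_lt_measure_le {Ω : Type*} [MeasurableSpace Ω] {μ : Measure Ω}
    {f : Ω → ℝ} {t : ℝ} {B : ENNReal} (h : ∀ t' > t, μ {ω | t' ≤ f ω} ≤ B) :
    μ {ω | t < f ω} ≤ B := by
  have hunion : {ω | t < f ω} = ⋃ k : ℕ, {ω | t + 1 / (k + 1) ≤ f ω} := by
    ext ω
    simp only [Set.mem_ofPred_eq, Set.mem_iUnion]
    refine ⟨fun hω => ?_, fun ⟨k, hk⟩ => (lt_add_of_pos_right t (by positivity)).trans_le hk⟩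
    obtain ⟨k, hk⟩ := exists_nat_one_div_lt (sub_pos.mpr hω)
    exact ⟨k, by linarith⟩
  have hmono : Monotone fun k : ℕ => {ω | t + 1 / ((k : ℝ) + 1) ≤ f ω} := by
    intro k l hkl ω (hω : t + 1 / ((k : ℝ) + 1) ≤ f ω)
    refine le_trans ?_ hω
    gcongr
  rw [hunion, hmono.measure_iUnion]
  exact iSup_le fun k => h _ (by simp; positivity)

section CompleteGraph

variable {Ω Ω₀ : Type*} [MeasurableSpace Ω] [MeasurableSpace Ω₀] {μ : Measure Ω}
  {μ₀ : Measure Ω₀} [IsProbabilityMeasure μ₀] {ξ : Ω₀ → ℝ} {N : ℕ} {X : EdgeT N → Ω → ℝ}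
  {a b : Fin N}

lemma measure_walkWeight_ge_le (hmeas : ∀ e, Measurable (X e)) (hind : iIndepFun X μ)
    (hid : ∀ e, IdentDistrib (X e) ξ μ μ₀) (hsym : SymmetricRV μ₀ ξ) (hξ : Measurable ξ)
    (p : (⊤ : SimpleGraph (Fin N)).Path a b) {u c : ℝ} (hu : 0 ≤ u)
    (hc : (c : EReal) < rateFn μ₀ ξ u) :
    μ {ω | N * u ≤ walkWeight (fun e => X e ω) p.1} ≤ ENNReal.ofReal (exp (-(N * c))) := by
  simp only [walkWeight_eq_sum]
  refine measure_sum_ge_le_exp_of_lt_rateFn hmeas hind hid hsym hξ ?_ hu hc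
  have := p.2.length_lt
  rw [Fintype.card_fin] at this
  exact (card_filter_mem_edges_le p.1).trans this.le

lemma measure_iSup_walkWeight_ge_le (hmeas : ∀ e, Measurable (X e)) (hind : iIndepFun X μ)
    (hid : ∀ e, IdentDistrib (X e) ξ μ μ₀) (hsym : SymmetricRV μ₀ ξ) (hξ : Measurable ξ)
    {u c : ℝ} (hu : 0 ≤ u) (hc : (c : EReal) < rateFn μ₀ ξ u) :
    μ {ω | N * u ≤ ⨆ p : (⊤ : SimpleGraph (Fin N)).Path a b, walkWeight (fun e => X e ω) p.1} ≤
      (N ^ (N - 1) : ℕ) * ENNReal.ofReal (exp (-(N * c))) := by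
  have : Nonempty ((⊤ : SimpleGraph (Fin N)).Path a b) :=
    let ⟨p, hp⟩ := SimpleGraph.preconnected_top.exists_isPath a b
    ⟨⟨p, hp⟩⟩
  have hsub : {ω | N * u ≤ ⨆ p : (⊤ : SimpleGraph (Fin N)).Path a b,
      walkWeight (fun e => X e ω) p.1} ⊆
      ⋃ p : (⊤ : SimpleGraph (Fin N)).Path a b, {ω | N * u ≤ walkWeight (fun e => X e ω) p.1} := by
    intro ω hω
    obtain ⟨p, hp⟩ := exists_eq_ciSup_of_finite
      (f := fun p : (⊤ : SimpleGraph (Fin N)).Path a b => walkWeight (fun e => X e ω) p.1)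
    exact Set.mem_iUnion.mpr ⟨p, le_of_le_of_eq hω hp.symm⟩
  calc _ ≤ ∑ p : (⊤ : SimpleGraph (Fin N)).Path a b,
        μ {ω | N * u ≤ walkWeight (fun e => X e ω) p.1} :=
        (measure_mono hsub).trans (measure_iUnion_fintype_le _ _)
    _ ≤ ∑ _p : (⊤ : SimpleGraph (Fin N)).Path a b, ENNReal.ofReal (exp (-(N * c))) :=
        Finset.sum_le_sum fun p _ => measure_walkWeight_ge_le hmeas hind hid hsym hξ p hu hc
    _ ≤ _ := by
        rw [Finset.sum_const, Finset.card_univ, nsmul_eq_mul]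
        gcongr
        simpa using SimpleGraph.card_path_le (⊤ : SimpleGraph (Fin N)) a b

lemma measure_rateFnInv_lt_iSup_walkWeight_le (hmeas : ∀ e, Measurable (X e))
    (hind : iIndepFun X μ) (hid : ∀ e, IdentDistrib (X e) ξ μ μ₀) (hsym : SymmetricRV μ₀ ξ)
    (hreg : RegularUpperTails μ₀ ξ) (hξ : Measurable ξ) :
    μ {ω | N * rateFnInv μ₀ ξ (log N) <
      ⨆ p : (⊤ : SimpleGraph (Fin N)).Path a b, walkWeight (fun e => X e ω) p.1} ≤
      ENNReal.ofReal (exp 1 / N) := by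
  have hN : (0 : ℝ) < N := by exact_mod_cast a.pos
  refine measure_lt_le_of_forall_lt_measure_le fun t ht => ?_
  obtain ⟨u, hu, hlog, hut⟩ := exists_le_rateFn_lt_rateFnInv_add (c := log N)
    (hreg.exists_le_rateFn hξ _) (div_pos (sub_pos.mpr ht) hN)
  have hc : ((log N - 1 / N : ℝ) : EReal) < rateFn μ₀ ξ u :=
    lt_of_lt_of_le (EReal.coe_lt_coe_iff.mpr (by simp [hN])) hlog
  have hNu : N * u ≤ t := by
    have := mul_lt_mul_of_pos_left hut hN
    rw [mul_add, mul_div_cancel₀ _ hN.ne'] at this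
    linarith
  refine (measure_mono fun ω (hω : t ≤ _) => hNu.trans hω).trans ?_
  refine (measure_iSup_walkWeight_ge_le hmeas hind hid hsym hξ hu hc).trans_eq ?_
  have hexp : exp (-(N * (log N - 1 / N))) = exp 1 / N ^ N := by
    rw [mul_sub, mul_one_div_cancel hN.ne', neg_sub, exp_sub, ← log_pow, exp_log (by positivity)]
  rw [hexp, ← ENNReal.ofReal_natCast, ← ENNReal.ofReal_mul (by positivity)]
  congr 1
  rw [Nat.cast_pow, ← Nat.sub_add_cancel a.pos, pow_succ, Nat.add_sub_cancel]
  field_simp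

end CompleteGraph

/-- with i.i.d. good edge weights on the complete graph (here on `n + 2`
vertices), the maximal weight `W` over all paths from vertex `0` to vertex `1` satisfies
`P(W > n Λ*⁻¹(log n)) → 0`. -/
theorem path_upper_whp {Ω₀ : Type*} [MeasurableSpace Ω₀] (μ₀ : Measure Ω₀)
    [IsProbabilityMeasure μ₀] (ξ : Ω₀ → ℝ) (hξ : Measurable ξ) (hgood : Good μ₀ ξ)
    {Ω : ℕ → Type*} [∀ n, MeasurableSpace (Ω n)] (μ : ∀ n, Measure (Ω n))
    [∀ n, IsProbabilityMeasure (μ n)]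
    (X : ∀ n, EdgeT (n + 2) → Ω n → ℝ) (hmeas : ∀ n e, Measurable (X n e))
    (hind : ∀ n, iIndepFun (X n) (μ n))
    (hid : ∀ n e, IdentDistrib (X n e) ξ (μ n) μ₀) :
    Tendsto (fun n : ℕ => μ n {ω |
        ((n + 2 : ℕ) : ℝ) * rateFnInv μ₀ ξ (Real.log ((n + 2 : ℕ) : ℝ)) <
          ⨆ p : {q : (⊤ : SimpleGraph (Fin (n + 2))).Walk 0 1 // q.IsPath},
            walkWeight (fun e => X n e ω)
              (p : (⊤ : SimpleGraph (Fin (n + 2))).Walk 0 1)}) atTop (nhds 0) := by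
  obtain ⟨hsym, -, hreg⟩ := hgood
  have hbound (n : ℕ) := measure_rateFnInv_lt_iSup_walkWeight_le (a := 0) (b := 1)
    (hmeas n) (hind n) (hid n) hsym hreg hξ
  have hlim : Tendsto (fun n : ℕ => exp 1 / ((n + 2 : ℕ) : ℝ)) atTop (nhds 0) :=
    (tendsto_const_div_atTop_nhds_zero_nat _).comp (tendsto_add_atTop_nat 2)
  refine tendsto_of_tendsto_of_tendsto_of_le_of_le tendsto_const_nhds ?_ (fun _ => zero_le) hbound
  simpa using ENNReal.tendsto_ofReal hlim
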